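/- For γ ∈ (0,1), the function g(x, d) = −(1−γ)x + 4√3(1−γ)√(x·d) + 3(1−γ)d − (5/2)(1−γ) over the domain {x, d ≥ 0, x + d ≤ 1/2} attains maximal value 0, attained exactly at (x, d) = (1/8, 3/8). -/
import Mathlib

theorem stmt_15 (γ : ℝ) (hγ : γ ∈ Set.Ioo (0:ℝ) 1) :
    let g : ℝ → ℝ → ℝ := fun x d =>
      -(1 - γ) * x + 4 * Real.sqrt 3 * (1 - γ) * Real.sqrt (x * d)
        + 3 * (1 - γ) * d - (5/2) * (1 - γ)
    IsGreatest {t : ℝ | ∃ x d : ℝ, 0 ≤ x ∧ 0 ≤ d ∧ x + d ≤ 1/2 ∧ t = g x d} 0 ∧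
    (∀ x d : ℝ, 0 ≤ x → 0 ≤ d → x + d ≤ 1/2 → g x d = 0 → x = 1/8 ∧ d = 3/8) := by
  obtain ⟨hγ0, hγ1⟩ := hγ
  intro g
  have h1γ : (0:ℝ) < 1 - γ := by linarith
  have hc : (Real.sqrt 3)^2 = 3 := Real.sq_sqrt (by norm_num)
  have hc0 : (0:ℝ) ≤ Real.sqrt 3 := Real.sqrt_nonneg 3
  constructor
  · constructor
    · refine ⟨1/8, 3/8, by norm_num, by norm_num, by norm_num, ?_⟩
      have hs : Real.sqrt ((1/8 : ℝ) * (3/8)) = Real.sqrt 3 / 8 := by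
        rw [show ((1/8:ℝ) * (3/8)) = 3 * (1/8)^2 by norm_num,
          Real.sqrt_mul (by norm_num), Real.sqrt_sq (by norm_num)]
        ring
      show (0:ℝ) = _
      simp only [g, hs]
      nlinarith [hc]
    · rintro t ⟨x, d, hx, hd, hsum, rfl⟩
      have hab : Real.sqrt (x * d) = Real.sqrt x * Real.sqrt d := Real.sqrt_mul hx d
      have ha : (Real.sqrt x)^2 = x := Real.sq_sqrt hx
      have hb : (Real.sqrt d)^2 = d := Real.sq_sqrt hd
      have ha0 : (0:ℝ) ≤ Real.sqrt x := Real.sqrt_nonneg x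
      have hb0 : (0:ℝ) ≤ Real.sqrt d := Real.sqrt_nonneg d
      show g x d ≤ 0
      simp only [g, hab]
      have hE' : -x + 4 * Real.sqrt 3 * (Real.sqrt x * Real.sqrt d) + 3 * d - 5/2 ≤ 0 := by
        nlinarith [sq_nonneg (Real.sqrt 3 * Real.sqrt x - Real.sqrt d)]
      have hprod := mul_nonneg h1γ.le (neg_nonneg.mpr hE')
      nlinarith [hprod]
  · intro x d hx hd hsum hgz
    have hab : Real.sqrt (x * d) = Real.sqrt x * Real.sqrt d := Real.sqrt_mul hx d
    have ha : (Real.sqrt x)^2 = x := Real.sq_sqrt hx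
    have hb : (Real.sqrt d)^2 = d := Real.sq_sqrt hd
    have ha0 : (0:ℝ) ≤ Real.sqrt x := Real.sqrt_nonneg x
    have hb0 : (0:ℝ) ≤ Real.sqrt d := Real.sqrt_nonneg d
    simp only [g, hab] at hgz
    set a := Real.sqrt x
    set b := Real.sqrt d
    set c := Real.sqrt 3
    have hE : -x + 4 * c * (a * b) + 3 * d - 5/2 = 0 := by
      have hmul : (1 - γ) * (-x + 4 * c * (a * b) + 3 * d - 5/2) = 0 := by
        linear_combination hgz
      exact (mul_eq_zero.mp hmul).resolve_left (by linarith)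
    have h1 : 2 * (c * a - b)^2 + (5/2 - 5 * (x + d)) = 0 := by
      linear_combination (-1) * hE + 2 * a^2 * hc + 6 * ha + 2 * hb
    have hsq : (c * a - b)^2 = 0 := by linarith [sq_nonneg (c * a - b)]
    have hxd : x + d = 1/2 := by linarith [sq_nonneg (c * a - b)]
    have hcab : c * a = b := by
      have := sq_eq_zero_iff.mp hsq
      linarith
    have hd3x : d = 3 * x := by
      have h2 : b^2 = (c * a)^2 := by rw [hcab]
      linear_combination -hb + h2 + a^2 * hc + 3 * ha
    constructor <;> linarith
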